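/- Let n ≥ 1, l ≤ n, and let 𝔽 ⊆ 𝔻₁ⁿ satisfy lh(𝔽) ≤ l and |𝔽| < 2^l − 1. Then there exists 𝔽₀ ⊆ 𝔻₁ⁿ \ 𝔽 with |𝔽₀| = 2^l − 1 − |𝔽| such that lh(𝔽 ∪ 𝔽₀) ≤ l. -/
import Mathlib


open MeasureTheory Real Set
open scoped Classical

noncomputable section

/-- The dyadic interval `Δ_k^{(j)} = [(j-1)/2^k, j/2^k)`. -/
def dyadic (k : ℕ) (j : ℤ) : Set ℝ := Set.Ico (((j : ℝ) - 1) / 2 ^ k) ((j : ℝ) / 2 ^ k)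

/-- The Haar function `χ_k^{(j)}`. -/
def haar (k : ℕ) (j : ℤ) (t : ℝ) : ℝ :=
  if t ∈ dyadic k (2 * j - 1) then (2 : ℝ) ^ (((k : ℝ) - 1) / 2)
  else if t ∈ dyadic k (2 * j) then -(2 : ℝ) ^ (((k : ℝ) - 1) / 2)
  else 0

/-- Membership in the dyadic tree `𝔻`. -/
def memD (kj : ℕ × ℤ) : Prop := 1 ≤ kj.1 ∧ 1 ≤ kj.2 ∧ kj.2 ≤ 2 ^ (kj.1 - 1)

/-- The finite dyadic tree `𝔻_m^n`. -/
def Dtree (m n : ℕ) : Finset (ℕ × ℤ) :=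
  (Finset.Icc m n).biUnion fun k => (Finset.Icc (1 : ℤ) (2 ^ (k - 1))).image fun j => (k, j)

/-- Number of indices of `F` lying on the branch through `t`. -/
def branchCount (F : Finset (ℕ × ℤ)) (t : ℝ) : ℕ :=
  (F.filter fun kj => t ∈ dyadic (kj.1 - 1) kj.2).card

/-- The local height of a finite index set. -/
def lh (F : Finset (ℕ × ℤ)) : ℕ :=
  sSup {m | ∃ t ∈ Set.Ico (0 : ℝ) 1, branchCount F t = m}

/-- The transformation `φ_h^{(i)}` interchanging `Δ_{h+1}^{(4i-2)}` and `Δ_{h+1}^{(4i-1)}`. -/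
def phi (h : ℕ) (i : ℤ) (t : ℝ) : ℝ :=
  if t ∈ dyadic (h + 1) (4 * i - 2) then t + 1 / 2 ^ (h + 1)
  else if t ∈ dyadic (h + 1) (4 * i - 1) then t - 1 / 2 ^ (h + 1)
  else t

/-- The Haar type ideal norm `τ(T | ℋ(F))`. -/
def tau {X Y : Type*} [NormedAddCommGroup X] [NormedSpace ℝ X]
    [NormedAddCommGroup Y] [NormedSpace ℝ Y]
    (T : X →L[ℝ] Y) (F : Finset (ℕ × ℤ)) : ℝ :=
  sInf {c : ℝ | 0 ≤ c ∧ ∀ x : ℕ × ℤ → X,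
    Real.sqrt (∫ t in Set.Ico (0 : ℝ) 1, ‖∑ kj ∈ F, haar kj.1 kj.2 t • T (x kj)‖ ^ 2)
      ≤ c * Real.sqrt (∑ kj ∈ F, ‖x kj‖ ^ 2)}

end


noncomputable section AuxExtension

lemma mem_dyadic_iff {m : ℕ} {j : ℤ} {t : ℝ} :
    t ∈ dyadic m j ↔ (j : ℝ) - 1 ≤ t * 2 ^ m ∧ t * 2 ^ m < j := by
  have h : (0:ℝ) < 2 ^ m := by positivity
  simp only [dyadic, Set.mem_Ico, div_le_iff₀ h, lt_div_iff₀ h]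

lemma dyadic_mem_Ico {m : ℕ} {j : ℤ} {t : ℝ} (hj1 : 1 ≤ j) (hj2 : j ≤ 2 ^ m)
    (ht : t ∈ dyadic m j) : t ∈ Set.Ico (0:ℝ) 1 := by
  rw [mem_dyadic_iff] at ht
  have h : (0:ℝ) < 2 ^ m := by positivity
  have hj1' : (1:ℝ) ≤ (j:ℝ) := by exact_mod_cast hj1
  have hj2' : (j:ℝ) ≤ 2 ^ m := by exact_mod_cast (by push_cast; exact_mod_cast hj2 : (j:ℝ) ≤ ((2:ℤ)^m : ℤ))
  constructor
  · nlinarith [ht.1]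
  · nlinarith [ht.2]

lemma dyadic_same_gen {m : ℕ} {j₁ j₂ : ℤ} {t : ℝ} (h1 : t ∈ dyadic m j₁)
    (h2 : t ∈ dyadic m j₂) : j₁ = j₂ := by
  rw [mem_dyadic_iff] at h1 h2
  have a1 : ((j₁ : ℝ)) < j₂ + 1 := by linarith [h1.2, h2.1]
  have a2 : ((j₂ : ℝ)) < j₁ + 1 := by linarith [h2.2, h1.1]
  have b1 : j₁ < j₂ + 1 := by exact_mod_cast a1
  have b2 : j₂ < j₁ + 1 := by exact_mod_cast a2
  omega

lemma dyadic_split {m : ℕ} {j : ℤ} {t : ℝ} :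
    t ∈ dyadic m j ↔ (t ∈ dyadic (m+1) (2*j-1) ∨ t ∈ dyadic (m+1) (2*j)) := by
  simp only [mem_dyadic_iff, pow_succ]
  push_cast
  constructor
  · rintro ⟨h1, h2⟩
    rcases lt_or_ge (t * (2^m * 2)) (2*j - 1) with h | h
    · left; constructor <;> nlinarith
    · right; constructor <;> nlinarith
  · rintro (⟨h1, h2⟩ | ⟨h1, h2⟩) <;> constructor <;> nlinarith

lemma dyadic_nested {k k' : ℕ} {j j' : ℤ} (hk : k ≤ k')
    (h1 : (j - 1) * 2 ^ (k' - k) + 1 ≤ j') (h2 : j' ≤ j * 2 ^ (k' - k))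
    {t : ℝ} (ht : t ∈ dyadic k' j') : t ∈ dyadic k j := by
  rw [mem_dyadic_iff] at ht ⊢
  have hpow : (2:ℝ) ^ k' = 2 ^ k * 2 ^ (k' - k) := by
    rw [← pow_add]; congr 1; omega
  have hp : (0:ℝ) < 2 ^ (k' - k) := by positivity
  have c1 : ((j:ℝ) - 1) * 2 ^ (k' - k) + 1 ≤ (j' : ℝ) := by
    have := h1; push_cast at this ⊢; exact_mod_cast this
  have c2 : (j' : ℝ) ≤ (j:ℝ) * 2 ^ (k' - k) := by
    have := h2; push_cast at this ⊢; exact_mod_cast this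
  constructor
  · have : ((j:ℝ) - 1) * 2 ^ (k' - k) ≤ (t * 2 ^ k) * 2 ^ (k' - k) := by
      rw [mul_assoc, ← hpow]; linarith [ht.1]
    exact le_of_mul_le_mul_right this hp
  · have : (t * 2 ^ k) * 2 ^ (k' - k) < (j:ℝ) * 2 ^ (k' - k) := by
      rw [mul_assoc, ← hpow]; linarith [ht.2, c2]
    exact lt_of_mul_lt_mul_right this (le_of_lt hp)

lemma bc_mono {A B : Finset (ℕ × ℤ)} (h : A ⊆ B) (t : ℝ) :
    branchCount A t ≤ branchCount B t :=
  Finset.card_le_card (Finset.filter_subset_filter _ h)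

lemma bc_union {A B : Finset (ℕ × ℤ)} (h : Disjoint A B) (t : ℝ) :
    branchCount (A ∪ B) t = branchCount A t + branchCount B t := by
  unfold branchCount
  rw [Finset.filter_union, Finset.card_union_of_disjoint]
  exact Finset.disjoint_filter_filter h

lemma bc_singleton (x : ℕ × ℤ) (t : ℝ) :
    branchCount {x} t = if t ∈ dyadic (x.1 - 1) x.2 then 1 else 0 := by
  unfold branchCount
  rw [Finset.filter_singleton]
  split <;> simp

lemma bc_insert {x : ℕ × ℤ} {F : Finset (ℕ × ℤ)} (hx : x ∉ F) (t : ℝ) :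
    branchCount (insert x F) t
      = branchCount F t + (if t ∈ dyadic (x.1 - 1) x.2 then 1 else 0) := by
  unfold branchCount
  rw [Finset.filter_insert]
  split
  · rw [Finset.card_insert_of_notMem (by simp [hx])]
  · omega

lemma bc_zero_of {A : Finset (ℕ × ℤ)} {t : ℝ} (h : ∀ x ∈ A, t ∉ dyadic (x.1 - 1) x.2) :
    branchCount A t = 0 := by
  unfold branchCount
  rw [Finset.card_eq_zero, Finset.filter_eq_empty_iff]
  exact h

/-- The subtree of the dyadic tree below node `(k, j)`, down to level `n`. -/
def sub (n k : ℕ) (j : ℤ) : Finset (ℕ × ℤ) :=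
  (Finset.Icc k n).biUnion fun k' =>
    (Finset.Icc ((j - 1) * 2 ^ (k' - k) + 1) (j * 2 ^ (k' - k))).image fun j' => (k', j')

lemma mem_sub {n k : ℕ} {j : ℤ} {x : ℕ × ℤ} :
    x ∈ sub n k j ↔ k ≤ x.1 ∧ x.1 ≤ n ∧
      (j - 1) * 2 ^ (x.1 - k) + 1 ≤ x.2 ∧ x.2 ≤ j * 2 ^ (x.1 - k) := by
  obtain ⟨a, b⟩ := x
  simp only [sub, Finset.mem_biUnion, Finset.mem_Icc, Finset.mem_image, Prod.mk.injEq]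
  constructor
  · rintro ⟨k', ⟨h1, h2⟩, j', ⟨h3, h4⟩, rfl, rfl⟩
    exact ⟨h1, h2, h3, h4⟩
  · rintro ⟨h1, h2, h3, h4⟩
    exact ⟨a, ⟨h1, h2⟩, b, ⟨h3, h4⟩, rfl, rfl⟩

lemma sub_last {n : ℕ} {j : ℤ} : sub n n j = {(n, j)} := by
  ext ⟨a, b⟩
  simp only [mem_sub, Finset.mem_singleton, Prod.mk.injEq]
  constructor
  · rintro ⟨h1, h2, h3, h4⟩
    have : a = n := le_antisymm h2 h1
    subst this
    simp only [Nat.sub_self, pow_zero, mul_one] at h3 h4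
    exact ⟨rfl, by omega⟩
  · rintro ⟨rfl, rfl⟩
    simp

lemma two_pow_sub {k' k : ℕ} (h : k + 1 ≤ k') : (2:ℤ) ^ (k' - k) = 2 * 2 ^ (k' - (k+1)) := by
  have : k' - k = (k' - (k+1)) + 1 := by omega
  rw [this, pow_succ]; ring

lemma sub_decomp {n k : ℕ} {j : ℤ} (hk : k < n) :
    sub n k j = insert (k, j) (sub n (k+1) (2*j-1) ∪ sub n (k+1) (2*j)) := by
  ext ⟨a, b⟩
  simp only [mem_sub, Finset.mem_insert, Finset.mem_union, Prod.mk.injEq]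
  constructor
  · rintro ⟨h1, h2, h3, h4⟩
    rcases eq_or_lt_of_le h1 with h | h
    · left
      subst h
      simp only [Nat.sub_self, pow_zero, mul_one] at h3 h4
      exact ⟨rfl, by omega⟩
    · right
      have hk1 : k + 1 ≤ a := h
      have hp := two_pow_sub hk1
      have hpos : (0:ℤ) < 2 ^ (a - (k+1)) := by positivity
      rw [hp] at h3 h4
      rcases le_or_gt b ((2*j-1) * 2 ^ (a - (k+1))) with hle | hlt
      · left; refine ⟨hk1, h2, ?_, hle⟩; nlinarith
      · right; refine ⟨hk1, h2, by nlinarith, by nlinarith⟩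
  · rintro (⟨rfl, rfl⟩ | (⟨h1, h2, h3, h4⟩ | ⟨h1, h2, h3, h4⟩))
    · exact ⟨le_refl _, le_of_lt hk, by simp, by simp⟩
    all_goals {
      have hp := two_pow_sub h1
      have hpos : (0:ℤ) < 2 ^ (a - (k+1)) := by positivity
      refine ⟨by omega, h2, ?_, ?_⟩ <;> rw [hp] <;> nlinarith
    }

lemma root_notMem_sub {n k : ℕ} {j j' : ℤ} : (k, j) ∉ sub n (k+1) j' := by
  simp [mem_sub]

lemma sub_children_disjoint {n k : ℕ} {j : ℤ} :
    Disjoint (sub n (k+1) (2*j-1)) (sub n (k+1) (2*j)) := by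
  rw [Finset.disjoint_left]
  rintro ⟨a, b⟩ h1 h2
  rw [mem_sub] at h1 h2
  have hpos : (0:ℤ) < 2 ^ (a - (k+1)) := by positivity
  obtain ⟨_, _, c1, c2⟩ := h1
  obtain ⟨_, _, c3, c4⟩ := h2
  nlinarith

lemma sub_dyadic {n k : ℕ} {j : ℤ} {x : ℕ × ℤ} (hx : x ∈ sub n k j) (hk : 1 ≤ k)
    {t : ℝ} (ht : t ∈ dyadic (x.1 - 1) x.2) : t ∈ dyadic (k - 1) j := by
  rw [mem_sub] at hx
  obtain ⟨h1, h2, h3, h4⟩ := hx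
  have he : (x.1 - 1) - (k - 1) = x.1 - k := by omega
  exact dyadic_nested (by omega) (by rw [he]; exact h3) (by rw [he]; exact h4) ht

lemma dyadic_left_mem {m : ℕ} {j : ℤ} : ((j:ℝ) - 1) / 2 ^ m ∈ dyadic m j := by
  have h : (0:ℝ) < 2 ^ m := by positivity
  rw [mem_dyadic_iff, div_mul_cancel₀ _ (ne_of_gt h)]
  constructor
  · linarith
  · linarith

lemma dyadic_split' {k : ℕ} (hk : 1 ≤ k) {j : ℤ} {t : ℝ} (ht : t ∈ dyadic (k-1) j) :
    t ∈ dyadic k (2*j-1) ∨ t ∈ dyadic k (2*j) := by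
  have h : (k - 1) + 1 = k := by omega
  rw [dyadic_split] at ht
  rwa [h] at ht

lemma bc_sub_chain {n : ℕ} : ∀ (d k : ℕ) (j : ℤ), k + d = n → 1 ≤ k →
    ∀ t ∈ dyadic (k-1) j, branchCount (sub n k j) t = d + 1 := by
  intro d
  induction d with
  | zero =>
    intro k j hkd hk t ht
    have : k = n := by omega
    subst this
    rw [sub_last, bc_singleton, if_pos ht]
  | succ d ih =>
    intro k j hkd hk t ht
    have hkn : k < n := by omega
    rw [sub_decomp hkn, bc_insert (by
        simp only [Finset.mem_union]
        push_neg
        exact ⟨root_notMem_sub, root_notMem_sub⟩),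
      bc_union sub_children_disjoint]
    rw [if_pos ht]
    have hzero : ∀ (j₁ j₂ : ℤ), t ∈ dyadic k j₁ → j₁ ≠ j₂ →
        branchCount (sub n (k+1) j₂) t = 0 := by
      intro j₁ j₂ ht₁ hne
      apply bc_zero_of
      intro x hx htx
      have := sub_dyadic hx (by omega) htx
      simp only [Nat.add_sub_cancel] at this
      exact hne (dyadic_same_gen ht₁ this)
    rcases dyadic_split' hk ht with h | h
    · rw [ih (k+1) (2*j-1) (by omega) (by omega) t (by simpa using h),
        hzero _ _ h (by omega)]
    · rw [ih (k+1) (2*j) (by omega) (by omega) t (by simpa using h),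
        hzero _ _ h (by omega)]
      omega

lemma bc_empty (t : ℝ) : branchCount ∅ t = 0 := by
  unfold branchCount; simp

lemma bc_split (F S : Finset (ℕ × ℤ)) (t : ℝ) :
    branchCount F t = branchCount (F \ S) t + branchCount (F ∩ S) t := by
  rw [← bc_union (Finset.disjoint_sdiff_inter F S), Finset.sdiff_union_inter]

lemma dyadic_child_sub {k : ℕ} (hk : 1 ≤ k) {j j' : ℤ} (h : j' = 2*j - 1 ∨ j' = 2*j)
    {t : ℝ} (ht : t ∈ dyadic k j') : t ∈ dyadic (k-1) j := by
  have he : k - (k-1) = 1 := by omega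
  apply dyadic_nested (show k-1 ≤ k by omega) ?_ ?_ ht <;>
    rw [he, pow_one] <;> omega

lemma sub_valid {n k : ℕ} {j : ℤ} (hj1 : 1 ≤ j) (hj2 : j ≤ 2^(k-1)) (hk : 1 ≤ k)
    {x : ℕ × ℤ} (hx : x ∈ sub n k j) : 1 ≤ x.2 ∧ x.2 ≤ 2^(x.1 - 1) := by
  rw [mem_sub] at hx
  obtain ⟨h1, h2, h3, h4⟩ := hx
  have hpos : (0:ℤ) < 2 ^ (x.1 - k) := by positivity
  constructor
  · nlinarith
  · calc x.2 ≤ j * 2 ^ (x.1 - k) := h4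
      _ ≤ 2^(k-1) * 2^(x.1-k) := by nlinarith
      _ = 2^(x.1-1) := by rw [← pow_add]; congr 1; omega

/-- The main counting lemma: if every free node of the subtree under `(k,j)` has a
point in its interval with full branch count `l`, then the subtree contains many
nodes of `F`. -/
lemma count_lemma (n l : ℕ) (F : Finset (ℕ × ℤ)) :
    ∀ (d k : ℕ) (j : ℤ) (a : ℕ), k + d = n → 1 ≤ k → 1 ≤ j → j ≤ 2^(k-1) →
    (∀ t ∈ dyadic (k-1) j, branchCount (F \ sub n k j) t = a) →
    (∀ x ∈ sub n k j, x ∉ F → ∃ t ∈ dyadic (x.1-1) x.2, l ≤ branchCount F t) →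
    (∃ t ∈ dyadic (k-1) j, l ≤ branchCount F t) →
    2^(l-a) - 1 ≤ (F ∩ sub n k j).card := by
  intro d
  induction d with
  | zero =>
    intro k j a hkd hk hj1 hj2 hanc hbad hreach
    have hkn : k = n := by omega
    subst hkn
    rw [sub_last]
    by_cases hv : (k, j) ∈ F
    · rw [Finset.inter_singleton_of_mem hv, Finset.card_singleton]
      obtain ⟨t, ht, hlt⟩ := hreach
      have h1 := bc_split F (sub k k j) t
      have h2 : branchCount (F ∩ sub k k j) t = 1 := by
        rw [sub_last, Finset.inter_singleton_of_mem hv, bc_singleton, if_pos (by exact ht)]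
      rw [hanc t ht, h2] at h1
      have hla : l ≤ a + 1 := by omega
      have : 2^(l-a) ≤ 2^1 := Nat.pow_le_pow_right (by norm_num) (by omega)
      omega
    · have he : F ∩ {(k, j)} = ∅ := by
        rw [Finset.inter_singleton_of_notMem hv]
      rw [he, Finset.card_empty]
      obtain ⟨t, ht, hlt⟩ := hbad (k, j) (by rw [sub_last]; simp) hv
      have ht' : t ∈ dyadic (k-1) j := ht
      have h1 := bc_split F (sub k k j) t
      have h2 : branchCount (F ∩ sub k k j) t = 0 := by
        rw [sub_last, he, bc_empty]
      rw [hanc t ht', h2] at h1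
      have : l ≤ a := by omega
      have : l - a = 0 := by omega
      simp [this]
  | succ d ih =>
    intro k j a hkd hk hj1 hj2 hanc hbad hreach
    have hkn : k < n := by omega
    set v : ℕ × ℤ := (k, j) with hv_def
    have hdecomp := sub_decomp (n := n) (j := j) hkn
    have hvnot : ∀ j' : ℤ, v ∉ sub n (k+1) j' := fun j' => root_notMem_sub
    -- the interval of any node of a child subtree lies in the child's interval
    have hchild_int : ∀ (j' : ℤ) (x : ℕ × ℤ), x ∈ sub n (k+1) j' →
        ∀ t : ℝ, t ∈ dyadic (x.1-1) x.2 → t ∈ dyadic k j' := by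
      intro j' x hx t ht
      have := sub_dyadic hx (by omega) ht
      simpa using this
    -- branch count of a child subtree vanishes off the child's interval
    have hbc_zero : ∀ (j₁ j₂ : ℤ) (t : ℝ), t ∈ dyadic k j₁ → j₁ ≠ j₂ →
        ∀ G : Finset (ℕ × ℤ), G ⊆ sub n (k+1) j₂ → branchCount G t = 0 := by
      intro j₁ j₂ t ht hne G hG
      apply bc_zero_of
      intro x hx htx
      exact hne (dyadic_same_gen ht (hchild_int j₂ x (hG hx) t htx))
    -- the constant for the children
    set b : ℕ := a + (if v ∈ F then 1 else 0) with hb_def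
    -- key: ancestor count for a child
    have hanc_child : ∀ j' : ℤ, j' = 2*j - 1 ∨ j' = 2*j →
        ∀ t ∈ dyadic k j', branchCount (F \ sub n (k+1) j') t = b := by
      intro j' hj' t ht
      obtain ⟨j'', hne, hdec, hdisj⟩ : ∃ j'' : ℤ, j'' ≠ j' ∧
          sub n k j = insert v (sub n (k+1) j' ∪ sub n (k+1) j'') ∧
          Disjoint (sub n (k+1) j') (sub n (k+1) j'') := by
        rcases hj' with rfl | rfl
        · exact ⟨2*j, by omega, hdecomp, sub_children_disjoint⟩
        · exact ⟨2*j-1, by omega, by rw [hdecomp, Finset.union_comm], sub_children_disjoint.symm⟩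
      have htp : t ∈ dyadic (k-1) j := dyadic_child_sub hk hj' ht
      have h1 := bc_split F (sub n k j) t
      have h2 := bc_split F (sub n (k+1) j') t
      rw [hanc t htp] at h1
      -- compute branchCount (F ∩ sub n k j) t
      have hPeq : F ∩ sub n k j = (F ∩ {v}) ∪ ((F ∩ sub n (k+1) j') ∪ (F ∩ sub n (k+1) j'')) := by
        rw [hdec, Finset.insert_eq, Finset.inter_union_distrib_left, Finset.inter_union_distrib_left]
      have hd1 : Disjoint (F ∩ {v}) ((F ∩ sub n (k+1) j') ∪ (F ∩ sub n (k+1) j'')) := by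
        simp only [Finset.disjoint_union_right]
        constructor <;>
          exact Finset.disjoint_left.mpr (fun x hx hx2 => by
            have hxv : x = v := Finset.mem_singleton.mp (Finset.mem_of_mem_inter_right hx)
            exact hvnot _ (hxv ▸ Finset.mem_of_mem_inter_right hx2))
      have hd2 : Disjoint (F ∩ sub n (k+1) j') (F ∩ sub n (k+1) j'') :=
        hdisj.mono Finset.inter_subset_right Finset.inter_subset_right
      have hsingle : branchCount (F ∩ {v}) t = if v ∈ F then 1 else 0 := by
        by_cases hvF : v ∈ F
        · rw [Finset.inter_singleton_of_mem hvF, bc_singleton, if_pos hvF, if_pos]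
          exact htp
        · rw [Finset.inter_singleton_of_notMem hvF, bc_empty, if_neg hvF]
      have hzero'' : branchCount (F ∩ sub n (k+1) j'') t = 0 :=
        hbc_zero j' j'' t ht (by omega) _ Finset.inter_subset_right
      have h3 : branchCount (F ∩ sub n k j) t
          = (if v ∈ F then 1 else 0) + branchCount (F ∩ sub n (k+1) j') t := by
        rw [hPeq, bc_union hd1, bc_union hd2, hsingle, hzero'']
        omega
      omega
    -- children are inside the subtree
    have hsubset : ∀ j' : ℤ, j' = 2*j - 1 ∨ j' = 2*j → sub n (k+1) j' ⊆ sub n k j := by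
      intro j' hj'
      rw [hdecomp]
      rcases hj' with rfl | rfl
      · exact (Finset.subset_union_left).trans (Finset.subset_insert _ _)
      · exact (Finset.subset_union_right).trans (Finset.subset_insert _ _)
    -- upper bound on l from hreach
    have hlbound : l ≤ b + (d + 1) := by
      obtain ⟨t, ht, hlt⟩ := hreach
      have h1 := bc_split F (sub n k j) t
      rw [hanc t ht] at h1
      have hPeq : F ∩ sub n k j = (F ∩ {v}) ∪ ((F ∩ sub n (k+1) (2*j-1)) ∪ (F ∩ sub n (k+1) (2*j))) := by
        rw [hdecomp, Finset.insert_eq, Finset.inter_union_distrib_left, Finset.inter_union_distrib_left]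
      have hsingle : branchCount (F ∩ {v}) t ≤ if v ∈ F then 1 else 0 := by
        by_cases hvF : v ∈ F
        · rw [Finset.inter_singleton_of_mem hvF, bc_singleton, if_pos hvF]
          split <;> omega
        · rw [Finset.inter_singleton_of_notMem hvF, bc_empty, if_neg hvF]
      have hch : branchCount (F ∩ sub n (k+1) (2*j-1)) t + branchCount (F ∩ sub n (k+1) (2*j)) t ≤ d + 1 := by
        rcases dyadic_split' hk ht with h | h
        · have hz := hbc_zero (2*j-1) (2*j) t h (by omega) (F ∩ sub n (k+1) (2*j)) Finset.inter_subset_right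
          have hm : branchCount (F ∩ sub n (k+1) (2*j-1)) t ≤ branchCount (sub n (k+1) (2*j-1)) t :=
            bc_mono Finset.inter_subset_right t
          have hc := bc_sub_chain (n := n) d (k+1) (2*j-1) (by omega) (by omega) t (by simpa using h)
          omega
        · have hz := hbc_zero (2*j) (2*j-1) t h (by omega) (F ∩ sub n (k+1) (2*j-1)) Finset.inter_subset_right
          have hm : branchCount (F ∩ sub n (k+1) (2*j)) t ≤ branchCount (sub n (k+1) (2*j)) t :=
            bc_mono Finset.inter_subset_right t
          have hc := bc_sub_chain (n := n) d (k+1) (2*j) (by omega) (by omega) t (by simpa using h)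
          omega
      have hd1 : Disjoint (F ∩ {v}) ((F ∩ sub n (k+1) (2*j-1)) ∪ (F ∩ sub n (k+1) (2*j))) := by
        simp only [Finset.disjoint_union_right]
        constructor <;>
          exact Finset.disjoint_left.mpr (fun x hx hx2 => by
            have hxv : x = v := Finset.mem_singleton.mp (Finset.mem_of_mem_inter_right hx)
            exact hvnot _ (hxv ▸ Finset.mem_of_mem_inter_right hx2))
      have hd2 : Disjoint (F ∩ sub n (k+1) (2*j-1)) (F ∩ sub n (k+1) (2*j)) :=
        sub_children_disjoint.mono Finset.inter_subset_right Finset.inter_subset_right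
      rw [hPeq, bc_union hd1, bc_union hd2] at h1
      omega
    -- apply the induction hypothesis to each child
    have hIH : ∀ j' : ℤ, j' = 2*j - 1 ∨ j' = 2*j →
        2^(l-b) - 1 ≤ (F ∩ sub n (k+1) j').card := by
      intro j' hj'
      apply ih (k+1) j' b (by omega) (by omega) (by omega)
      · show j' ≤ 2^((k+1)-1)
        have h2 : (2:ℤ)^((k+1)-1) = 2 * 2^(k-1) := by
          rw [show (k+1)-1 = (k-1)+1 by omega, pow_succ]; ring
        rw [h2]; omega
      · intro t ht
        exact hanc_child j' hj' t (by simpa using ht)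
      · intro x hx hxF
        exact hbad x (hsubset j' hj' hx) hxF
      · -- hreach for the child
        by_cases hall : ∀ x ∈ sub n (k+1) j', x ∈ F
        · -- the whole child subtree is contained in F
          set t₁ : ℝ := ((j':ℝ) - 1) / 2 ^ k with ht₁_def
          have ht₁ : t₁ ∈ dyadic k j' := dyadic_left_mem
          refine ⟨t₁, by simpa using ht₁, ?_⟩
          have h1 := bc_split F (sub n (k+1) j') t₁
          rw [hanc_child j' hj' t₁ ht₁] at h1
          have hFS : F ∩ sub n (k+1) j' = sub n (k+1) j' :=
            Finset.inter_eq_right.mpr (fun x hx => hall x hx)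
          have hc := bc_sub_chain (n := n) d (k+1) j' (by omega) (by omega) t₁ (by simpa using ht₁)
          rw [hFS, hc] at h1
          omega
        · push_neg at hall
          obtain ⟨x, hx, hxF⟩ := hall
          obtain ⟨t, ht, hlt⟩ := hbad x (hsubset j' hj' hx) hxF
          exact ⟨t, by simpa using hchild_int j' x hx t ht, hlt⟩
    -- combine the cardinalities
    have hcard : (F ∩ sub n (k+1) (2*j-1)).card + (F ∩ sub n (k+1) (2*j)).card
        + (if v ∈ F then 1 else 0) ≤ (F ∩ sub n k j).card := by
      have hPeq : F ∩ sub n k j = (F ∩ {v}) ∪ ((F ∩ sub n (k+1) (2*j-1)) ∪ (F ∩ sub n (k+1) (2*j))) := by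
        rw [hdecomp, Finset.insert_eq, Finset.inter_union_distrib_left, Finset.inter_union_distrib_left]
      have hd1 : Disjoint (F ∩ {v}) ((F ∩ sub n (k+1) (2*j-1)) ∪ (F ∩ sub n (k+1) (2*j))) := by
        simp only [Finset.disjoint_union_right]
        constructor <;>
          exact Finset.disjoint_left.mpr (fun x hx hx2 => by
            have hxv : x = v := Finset.mem_singleton.mp (Finset.mem_of_mem_inter_right hx)
            exact hvnot _ (hxv ▸ Finset.mem_of_mem_inter_right hx2))
      have hd2 : Disjoint (F ∩ sub n (k+1) (2*j-1)) (F ∩ sub n (k+1) (2*j)) :=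
        sub_children_disjoint.mono Finset.inter_subset_right Finset.inter_subset_right
      rw [hPeq, Finset.card_union_of_disjoint hd1, Finset.card_union_of_disjoint hd2]
      have : (F ∩ {v}).card = if v ∈ F then 1 else 0 := by
        by_cases hvF : v ∈ F
        · rw [Finset.inter_singleton_of_mem hvF, Finset.card_singleton, if_pos hvF]
        · rw [Finset.inter_singleton_of_notMem hvF, Finset.card_empty, if_neg hvF]
      omega
    have h1 := hIH (2*j-1) (Or.inl rfl)
    have h2 := hIH (2*j) (Or.inr rfl)
    by_cases hla : l ≤ a
    · have : l - a = 0 := by omega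
      simp [this]
    · by_cases hvF : v ∈ F
      · have hbval : b = a + 1 := by rw [hb_def, if_pos hvF]
        have hpow : 2^(l-a) = 2 * 2^(l-(a+1)) := by
          rw [show l-a = (l-(a+1))+1 by omega, pow_succ]; ring
        have hone : 1 ≤ 2^(l-(a+1)) := Nat.one_le_two_pow
        rw [if_pos hvF] at hcard
        rw [hbval] at h1 h2
        omega
      · have hbval : b = a := by rw [hb_def, if_neg hvF]; omega
        have hone : 1 ≤ 2^(l-a) := Nat.one_le_two_pow
        rw [if_neg hvF] at hcard
        rw [hbval] at h1 h2
        omega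

lemma Dtree_eq_sub {n : ℕ} : Dtree 1 n = sub n 1 1 := by
  ext ⟨a, b⟩
  simp only [Dtree, Finset.mem_biUnion, Finset.mem_Icc, Finset.mem_image, Prod.mk.injEq, mem_sub]
  constructor
  · rintro ⟨k, ⟨h1, h2⟩, j, ⟨h3, h4⟩, rfl, rfl⟩
    refine ⟨h1, h2, by omega, by omega⟩
  · rintro ⟨h1, h2, h3, h4⟩
    exact ⟨a, ⟨h1, h2⟩, b, ⟨by omega, by omega⟩, rfl, rfl⟩

lemma dyadic_zero_one : dyadic 0 1 = Set.Ico (0:ℝ) 1 := by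
  unfold dyadic; norm_num

lemma lh_le_iff (F : Finset (ℕ × ℤ)) (l : ℕ) :
    lh F ≤ l ↔ ∀ t ∈ Set.Ico (0:ℝ) 1, branchCount F t ≤ l := by
  have hbdd : BddAbove {m | ∃ t ∈ Set.Ico (0:ℝ) 1, branchCount F t = m} :=
    ⟨F.card, fun m ⟨t, _, hm⟩ => hm ▸ Finset.card_filter_le _ _⟩
  have hne : Set.Nonempty {m | ∃ t ∈ Set.Ico (0:ℝ) 1, branchCount F t = m} :=
    ⟨branchCount F 0, 0, ⟨le_refl 0, zero_lt_one⟩, rfl⟩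
  constructor
  · intro h t ht
    exact le_trans (le_csSup hbdd ⟨t, ht, rfl⟩) h
  · intro h
    exact csSup_le hne (by rintro m ⟨t, ht, rfl⟩; exact h t ht)

lemma step_lemma (n l : ℕ) (hn : 1 ≤ n) (hl : l ≤ n) (F : Finset (ℕ × ℤ))
    (hF : F ⊆ Dtree 1 n) (hlh : ∀ t ∈ Set.Ico (0:ℝ) 1, branchCount F t ≤ l)
    (hcard : F.card < 2^l - 1) :
    ∃ x ∈ Dtree 1 n, x ∉ F ∧ ∀ t ∈ Set.Ico (0:ℝ) 1, branchCount (insert x F) t ≤ l := by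
  have hl1 : 1 ≤ l := by
    rcases Nat.eq_zero_or_pos l with h | h
    · subst h; simp at hcard
    · exact h
  have hD : Dtree 1 n = sub n 1 1 := Dtree_eq_sub
  by_contra hcon
  push_neg at hcon
  have hbad : ∀ x ∈ sub n 1 1, x ∉ F → ∃ t ∈ dyadic (x.1-1) x.2, l ≤ branchCount F t := by
    intro x hx hxF
    obtain ⟨t, ht01, hgt⟩ := hcon x (hD ▸ hx) hxF
    rw [bc_insert hxF] at hgt
    by_cases htx : t ∈ dyadic (x.1-1) x.2
    · refine ⟨t, htx, ?_⟩
      rw [if_pos htx] at hgt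
      omega
    · rw [if_neg htx] at hgt
      have := hlh t ht01
      omega
  by_cases hreach : ∃ t ∈ dyadic 0 1, l ≤ branchCount F t
  · -- apply the counting lemma at the root
    have hFsub : F ⊆ sub n 1 1 := hD ▸ hF
    have h := count_lemma n l F (n-1) 1 1 0 (by omega) (le_refl 1) (le_refl 1)
      (by norm_num)
      (by
        intro t ht
        have : F \ sub n 1 1 = ∅ := Finset.sdiff_eq_empty_iff_subset.mpr hFsub
        rw [this, bc_empty])
      hbad
      (by simpa using hreach)
    rw [Finset.inter_eq_left.mpr hFsub] at h
    simp only [Nat.sub_zero] at h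
    omega
  · push_neg at hreach
    have hfree : ∃ x ∈ Dtree 1 n, x ∉ F := by
      by_contra hno
      push_neg at hno
      have hsubF : sub n 1 1 ⊆ F := fun x hx => hno x (hD ▸ hx)
      have h0 : (0:ℝ) ∈ dyadic 0 1 := by rw [dyadic_zero_one]; exact ⟨le_refl 0, zero_lt_one⟩
      have hchain := bc_sub_chain (n := n) (n-1) 1 1 (by omega) (le_refl 1) 0 (by simpa using h0)
      have hmono := bc_mono hsubF (0:ℝ)
      have := hreach 0 h0
      omega
    obtain ⟨x, hxD, hxF⟩ := hfree
    obtain ⟨t, ht01, hgt⟩ := hcon x hxD hxF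
    rw [bc_insert hxF] at hgt
    have h1 : branchCount F t < l := hreach t (by rwa [dyadic_zero_one])
    split at hgt <;> omega

lemma ext_induction (n l : ℕ) (hn : 1 ≤ n) (hl : l ≤ n) :
    ∀ (m : ℕ) (F : Finset (ℕ × ℤ)), F ⊆ Dtree 1 n →
    (∀ t ∈ Set.Ico (0:ℝ) 1, branchCount F t ≤ l) → F.card + m ≤ 2^l - 1 →
    ∃ F₀ : Finset (ℕ × ℤ), F₀ ⊆ Dtree 1 n \ F ∧ F₀.card = m ∧
      ∀ t ∈ Set.Ico (0:ℝ) 1, branchCount (F ∪ F₀) t ≤ l := by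
  intro m
  induction m with
  | zero =>
    intro F hF hlh hcard
    exact ⟨∅, Finset.empty_subset _, Finset.card_empty, by simpa [Finset.union_empty] using hlh⟩
  | succ m ih =>
    intro F hF hlh hcard
    obtain ⟨x, hxD, hxF, hx⟩ := step_lemma n l hn hl F hF hlh (by omega)
    obtain ⟨F₀', hsub, hcard', hbc⟩ := ih (insert x F)
      (Finset.insert_subset hxD hF) hx
      (by rw [Finset.card_insert_of_notMem hxF]; omega)
    have hxF₀' : x ∉ F₀' := by
      intro hmem
      have := hsub hmem
      rw [Finset.mem_sdiff] at this
      exact this.2 (Finset.mem_insert_self x F)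
    refine ⟨insert x F₀', ?_, ?_, ?_⟩
    · apply Finset.insert_subset
      · rw [Finset.mem_sdiff]; exact ⟨hxD, hxF⟩
      · exact hsub.trans (Finset.sdiff_subset_sdiff (le_refl _) (Finset.subset_insert x F))
    · rw [Finset.card_insert_of_notMem hxF₀', hcard']
    · intro t ht
      have heq : F ∪ insert x F₀' = insert x F ∪ F₀' := by
        rw [Finset.union_insert, Finset.insert_union]
      rw [heq]
      exact hbc t ht

end AuxExtension

theorem exists_extension_set (n l : ℕ) (hn : 1 ≤ n) (hl : l ≤ n)
    (F : Finset (ℕ × ℤ)) (hF : F ⊆ Dtree 1 n) (hlh : lh F ≤ l)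
    (hcard : F.card < 2 ^ l - 1) :
    ∃ F₀ : Finset (ℕ × ℤ), F₀ ⊆ Dtree 1 n \ F ∧
      F₀.card = 2 ^ l - 1 - F.card ∧ lh (F ∪ F₀) ≤ l := by
  have hlh' := (lh_le_iff F l).mp hlh
  obtain ⟨F₀, h1, h2, h3⟩ := ext_induction n l hn hl (2 ^ l - 1 - F.card) F hF hlh' (by omega)
  exact ⟨F₀, h1, h2, (lh_le_iff (F ∪ F₀) l).mpr h3⟩
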